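/- Fix n ≥ 1 and a field 𝕜 with q ∈ 𝕜 invertible. Let i be a positive integer with i ∉ {n-1, n}. Then in the Hecke algebra (of a large enough symmetric group containing both indices), the generator T_i commutes with the Young–Jucys–Murphy element J_n = Σ_{j=1}^{n-1} q^{j-n} T_{(j,n)}. Consequently, J_n commutes with every element of the subalgebra H_{n-1}(q) generated by T_1,...,T_{n-2}. -/

import Mathlib

/-- The Coxeter length of a permutation of `Fin n`, i.e. its number of inversions. -/
def permLength {n : ℕ} (w : Equiv.Perm (Fin n)) : ℕ :=
  (Finset.univ.filter fun p : Fin n × Fin n => p.1 < p.2 ∧ w p.2 < w p.1).card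

/-- A realization of the type-A Iwahori–Hecke algebra `H_n(q)` inside a `𝕜`-algebra `H`:
a family `T_w` (`w ∈ S_n`) with `T_1 = 1`, `T_v T_w = T_{vw}` whenever lengths add
(equivalently, `T_w = T_{i_1} ⋯ T_{i_k}` for any reduced word), and the quadratic
relation `T_s² = (q-1) T_s + q` for simple transpositions `s = (i, i+1)`. -/
structure HeckeFamily (𝕜 : Type*) [CommRing 𝕜] (q : 𝕜) (n : ℕ)
    (H : Type*) [Ring H] [Algebra 𝕜 H] where
  T : Equiv.Perm (Fin n) → H
  T_one : T 1 = 1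
  T_mul : ∀ v w : Equiv.Perm (Fin n),
    permLength (v * w) = permLength v + permLength w → T v * T w = T (v * w)
  T_quad : ∀ i j : Fin n, (i : ℕ) + 1 = (j : ℕ) →
    T (Equiv.swap i j) * T (Equiv.swap i j) =
      (q - 1) • T (Equiv.swap i j) + algebraMap 𝕜 H q


/-!
If the permutation `w` fixes both points of an adjacent transposition `s`, then `s w = w s` and
both products are length-additive, so `T_s` commutes with `T_w`. This disposes of every term
`T_{(j,n)}` of `J_n` except, when `s = (i, i+1)` with `i + 1 < n`, the two terms `j = i, i + 1`.
Those combine, through `T_{(i,n)} = T_s T_{(i+1,n)} T_s`, into a multiple of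
`T_s a T_s + q a` with `a = T_{(i+1,n)}`, and by the quadratic relation `T_s` commutes with
every such element. The subalgebra `H_{n-1}(q)` is generated by the `T_s` just treated.
-/

open Equiv Finset

namespace Equiv.Perm

variable {n : ℕ}

def inversions (w : Perm (Fin n)) : Finset (Fin n × Fin n) :=
  univ.filter fun p => p.1 < p.2 ∧ w p.2 < w p.1

@[simp]
theorem mem_inversions {w : Perm (Fin n)} {p : Fin n × Fin n} :
    p ∈ w.inversions ↔ p.1 < p.2 ∧ w p.2 < w p.1 := by
  rw [inversions, mem_filter, and_iff_right (mem_univ p)]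

theorem inversions_one : inversions (1 : Perm (Fin n)) = ∅ :=
  eq_empty_of_forall_notMem fun _ hp => lt_asymm (mem_inversions.1 hp).1 (mem_inversions.1 hp).2

theorem swap_lt_swap_of_succ_eq {k k' a b : Fin n} (h : (k : ℕ) + 1 = k') (hab : a < b)
    (hne : (a, b) ≠ (k, k')) : swap k k' a < swap k k' b := by
  simp only [ne_eq, Prod.mk.injEq, not_and] at hne
  rw [swap_apply_def, swap_apply_def]
  split_ifs <;> simp only [Fin.lt_def, Fin.ext_iff] at * <;> omega

theorem inversions_mul_swap {w : Perm (Fin n)} {k k' : Fin n} (h : (k : ℕ) + 1 = k')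
    (hw : w k < w k') :
    (w * swap k k').inversions =
      insert (k, k') (w.inversions.image (Prod.map (swap k k') (swap k k'))) := by
  refine Finset.ext fun ⟨a, b⟩ => ?_
  simp only [mem_inversions, mem_insert, mem_image, Prod.exists, Prod.map, Prod.mk.injEq,
    coe_mul, Function.comp_apply]
  constructor
  · rintro ⟨hab, hba⟩
    by_cases hp : (a, b) = (k, k')
    · exact Or.inl (Prod.mk.inj hp)
    · exact Or.inr ⟨_, _, ⟨swap_lt_swap_of_succ_eq h hab hp, hba⟩, swap_apply_self ..,
        swap_apply_self ..⟩
  · rintro (⟨rfl, rfl⟩ | ⟨x, y, ⟨hxy, hyx⟩, rfl, rfl⟩)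
    · exact ⟨Fin.lt_def.2 (by omega), by simpa using hw⟩
    · refine ⟨swap_lt_swap_of_succ_eq h hxy ?_, by simpa using hyx⟩
      rintro ⟨⟩
      exact lt_asymm hw hyx

theorem permLength_mul_swap {w : Perm (Fin n)} {k k' : Fin n} (h : (k : ℕ) + 1 = k')
    (hw : w k < w k') : permLength (w * swap k k') = permLength w + 1 := by
  have hinj : Function.Injective (Prod.map (swap k k') (swap k k')) :=
    (swap k k').injective.prodMap (swap k k').injective
  have hnew : (k, k') ∉ w.inversions.image (Prod.map (swap k k') (swap k k')) := by
    simp only [mem_image, mem_inversions, Prod.exists, Prod.map, Prod.mk.injEq, not_exists,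
      not_and]
    intro x y hxy hx hy
    rw [swap_apply_eq_iff, swap_apply_left] at hx
    rw [swap_apply_eq_iff, swap_apply_right] at hy
    have := Fin.lt_def.1 hxy.1
    rw [hx, hy] at this
    omega
  change #(w * swap k k').inversions = #w.inversions + 1
  rw [inversions_mul_swap h hw, card_insert_of_notMem hnew, card_image_of_injective _ hinj]

theorem permLength_inv (w : Perm (Fin n)) : permLength w⁻¹ = permLength w :=
  card_bij' (fun p _ => (w⁻¹ p.2, w⁻¹ p.1)) (fun p _ => (w p.2, w p.1))
    (fun p hp => by simp_all) (fun p hp => by simp_all)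
    (fun p _ => by simp) (fun p _ => by simp)

theorem permLength_swap_mul {w : Perm (Fin n)} {k k' : Fin n} (h : (k : ℕ) + 1 = k')
    (hw : w⁻¹ k < w⁻¹ k') : permLength (swap k k' * w) = permLength w + 1 := by
  rw [← permLength_inv, mul_inv_rev, swap_inv, permLength_mul_swap h hw, permLength_inv]

theorem permLength_swap_of_succ_eq {k k' : Fin n} (h : (k : ℕ) + 1 = k') :
    permLength (swap k k') = 1 := by
  have := permLength_mul_swap (w := 1) h
    (by rw [one_apply, one_apply, Fin.lt_def]; omega)
  rwa [one_mul, show permLength (1 : Perm (Fin n)) = 0 from card_eq_zero.2 inversions_one] at this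

end Equiv.Perm

theorem commute_mul_mul_add_smul_of_mul_self {R A : Type*} [CommRing R] [Ring A] [Algebra R A]
    {q : R} {a : A} (ha : a * a = (q - 1) • a + algebraMap R A q) (x : A) :
    Commute a (a * x * a + q • x) := by
  rw [Commute, SemiconjBy, mul_add, add_mul, ← mul_assoc, ← mul_assoc, ha,
    mul_assoc (a * x), ha]
  simp only [add_mul, mul_add, smul_mul_assoc, mul_smul_comm, Algebra.algebraMap_eq_smul_one,
    one_mul, mul_one, mul_assoc]
  abel

namespace HeckeFamily

open Equiv.Perm

section CommRing

variable {𝕜 : Type*} [CommRing 𝕜] {q : 𝕜} {m : ℕ} {H : Type*} [Ring H] [Algebra 𝕜 H]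
  (hF : HeckeFamily 𝕜 q m H) {k k' : Fin m}

theorem T_swap_mul (h : (k : ℕ) + 1 = k') {w : Perm (Fin m)} (hw : w⁻¹ k < w⁻¹ k') :
    hF.T (swap k k') * hF.T w = hF.T (swap k k' * w) :=
  hF.T_mul _ _ (by rw [permLength_swap_mul h hw, permLength_swap_of_succ_eq h, add_comm])

theorem T_mul_swap (h : (k : ℕ) + 1 = k') {w : Perm (Fin m)} (hw : w k < w k') :
    hF.T w * hF.T (swap k k') = hF.T (w * swap k k') :=
  hF.T_mul _ _ (by rw [permLength_mul_swap h hw, permLength_swap_of_succ_eq h])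

theorem commute_T_swap_of_apply_eq (h : (k : ℕ) + 1 = k') {w : Perm (Fin m)} (hk : w k = k)
    (hk' : w k' = k') : Commute (hF.T (swap k k')) (hF.T w) := by
  have hlt : k < k' := Fin.lt_def.2 (by omega)
  have hk_inv : w⁻¹ k = k := inv_eq_iff_eq.2 hk.symm
  have hk'_inv : w⁻¹ k' = k' := inv_eq_iff_eq.2 hk'.symm
  rw [Commute, SemiconjBy, hF.T_swap_mul h (by rwa [hk_inv, hk'_inv]),
    hF.T_mul_swap h (by rwa [hk, hk']), mul_swap_eq_swap_mul, hk, hk']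

theorem T_swap_eq_T_mul_T_mul_T (h : (k : ℕ) + 1 = k') {b : Fin m} (hb : k' < b) :
    hF.T (swap k b) = hF.T (swap k k') * hF.T (swap k' b) * hF.T (swap k k') := by
  have hkk' : k ≠ k' := Fin.ne_of_val_ne (by omega)
  have hkb : k < b := Fin.lt_def.2 (by rw [Fin.lt_def] at hb; omega)
  have hsb : swap k k' b = b := swap_apply_of_ne_of_ne hkb.ne' hb.ne'
  have hconj : swap k k' * swap k' b * swap k k' = swap k b := by
    nth_rewrite 2 [← swap_inv k k']
    rw [← swap_apply_apply, swap_apply_right, hsb]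
  rw [hF.T_swap_mul h (by simpa [swap_apply_of_ne_of_ne hkk' hkb.ne] using hkb),
    hF.T_mul_swap h (by simpa [swap_apply_of_ne_of_ne hkk' hkb.ne, hsb] using hb), hconj]

end CommRing

section Field

variable {𝕜 : Type*} [Field 𝕜] {q : 𝕜} {m : ℕ} {H : Type*} [Ring H] [Algebra 𝕜 H]
  (hF : HeckeFamily 𝕜 q m H) {k k' : Fin m}

def jucysMurphyTerm (b : Fin m) (j : ℕ) : H :=
  if h : j < b then q⁻¹ ^ ((b : ℕ) - j) • hF.T (swap ⟨j, h.trans b.isLt⟩ b) else 0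

/-- Positions are `0`-indexed, so `jucysMurphy hF b` is the element `J_{b+1}` of the paper. -/
def jucysMurphy (b : Fin m) : H :=
  ∑ j ∈ range b, hF.jucysMurphyTerm b j

theorem jucysMurphy_eq_sum_attach (b : Fin m) :
    hF.jucysMurphy b = ∑ j ∈ (range b).attach,
      q⁻¹ ^ ((b : ℕ) - j) • hF.T (swap ⟨j, (mem_range.1 j.2).trans b.isLt⟩ b) := by
  rw [jucysMurphy, ← sum_attach]
  exact sum_congr rfl fun j _ => dif_pos (mem_range.1 j.2)

theorem commute_T_swap_jucysMurphyTerm (h : (k : ℕ) + 1 = k') {b : Fin m} (hkb : k ≠ b)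
    (hk'b : k' ≠ b) {j : ℕ} (hjk : j ≠ k) (hjk' : j ≠ k') :
    Commute (hF.T (swap k k')) (hF.jucysMurphyTerm b j) := by
  unfold jucysMurphyTerm
  split_ifs
  · refine (hF.commute_T_swap_of_apply_eq h ?_ ?_).smul_right _ <;>
      exact swap_apply_of_ne_of_ne (Fin.ne_of_val_ne (by simp; omega)) ‹_›
  · exact Commute.zero_right _

theorem jucysMurphyTerm_add_jucysMurphyTerm (hq : q ≠ 0) (h : (k : ℕ) + 1 = k') {b : Fin m}
    (hb : k' < b) :
    hF.jucysMurphyTerm b k + hF.jucysMurphyTerm b k' =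
      q⁻¹ ^ ((b : ℕ) - k) • (hF.T (swap k k') * hF.T (swap k' b) * hF.T (swap k k') +
        q • hF.T (swap k' b)) := by
  rw [Fin.lt_def] at hb
  have hcoeff : q⁻¹ ^ ((b : ℕ) - k) * q = q⁻¹ ^ ((b : ℕ) - k') := by
    rw [show (b : ℕ) - k = (b - k') + 1 by omega, pow_succ, mul_assoc, inv_mul_cancel₀ hq,
      mul_one]
  rw [jucysMurphyTerm, jucysMurphyTerm, dif_pos (by omega), dif_pos hb, Fin.eta, Fin.eta,
    smul_add, smul_smul, hcoeff, ← hF.T_swap_eq_T_mul_T_mul_T h (Fin.lt_def.2 hb)]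

theorem commute_T_swap_jucysMurphy (hq : q ≠ 0) (h : (k : ℕ) + 1 = k') {b : Fin m}
    (hkb : k ≠ b) (hk'b : k' ≠ b) :
    Commute (hF.T (swap k k')) (hF.jucysMurphy b) := by
  have hfar : ∀ j : ℕ, j ≠ k → j ≠ k' → Commute (hF.T (swap k k')) (hF.jucysMurphyTerm b j) :=
    fun _ => hF.commute_T_swap_jucysMurphyTerm h hkb hk'b
  rcases hk'b.lt_or_gt with hlt | hgt
  · have hpair : {(k : ℕ), (k' : ℕ)} ⊆ range b := by
      rw [Fin.lt_def] at hlt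
      simp only [insert_subset_iff, singleton_subset_iff, mem_range]
      omega
    rw [jucysMurphy, ← sum_sdiff hpair, sum_pair (by omega),
      hF.jucysMurphyTerm_add_jucysMurphyTerm hq h hlt]
    refine (Commute.sum_right _ _ _ fun j hj => ?_).add_right
      ((commute_mul_mul_add_smul_of_mul_self (hF.T_quad k k' h) _).smul_right _)
    simp only [mem_sdiff, mem_insert, mem_singleton, not_or] at hj
    exact hfar j hj.2.1 hj.2.2
  · refine Commute.sum_right _ _ _ fun j hj => hfar j ?_ ?_ <;>
      · rw [Fin.lt_def] at hgt
        have := Fin.val_ne_of_ne hkb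
        rw [mem_range] at hj
        omega

end Field

end HeckeFamily

/-- Let `n ≥ 1`, `q` invertible, and `i` a positive integer with `i ∉ {n-1, n}`. Then in
the Hecke algebra `H_m(q)` with `m > max(i, n)`, the generator `T_i` commutes with the
Young–Jucys–Murphy element `J_n = Σ_{j=1}^{n-1} q^{j-n} T_{(j,n)}`; consequently `J_n`
commutes with every element of the subalgebra generated by `T_1, ..., T_{n-2}`. -/
theorem stmt17 (𝕜 : Type*) [Field 𝕜] (q : 𝕜) (hq : q ≠ 0) (n i m : ℕ)
    (hn : 1 ≤ n) (hi : 0 < i) (hi1 : i ≠ n - 1) (hi2 : i ≠ n)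
    (him : i < m) (hnm : n < m)
    (H : Type*) [Ring H] [Algebra 𝕜 H] (hF : HeckeFamily 𝕜 q m H) :
    (hF.T (Equiv.swap ⟨i - 1, by omega⟩ ⟨i, by omega⟩) *
        (∑ j ∈ (Finset.range (n - 1)).attach,
          (q⁻¹ ^ (n - 1 - (j : ℕ))) •
            hF.T (Equiv.swap
              ⟨(j : ℕ), by have := Finset.mem_range.mp j.2; omega⟩ ⟨n - 1, by omega⟩)) =
      (∑ j ∈ (Finset.range (n - 1)).attach,
          (q⁻¹ ^ (n - 1 - (j : ℕ))) •
            hF.T (Equiv.swap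
              ⟨(j : ℕ), by have := Finset.mem_range.mp j.2; omega⟩ ⟨n - 1, by omega⟩)) *
        hF.T (Equiv.swap ⟨i - 1, by omega⟩ ⟨i, by omega⟩)) ∧
    (∀ x ∈ Algebra.adjoin 𝕜
        {y : H | ∃ j : ℕ, ∃ hj : 1 ≤ j ∧ j ≤ n - 2,
          y = hF.T (Equiv.swap (⟨j - 1, by omega⟩ : Fin m) ⟨j, by omega⟩)},
      x * (∑ j ∈ (Finset.range (n - 1)).attach,
          (q⁻¹ ^ (n - 1 - (j : ℕ))) •
            hF.T (Equiv.swap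
              ⟨(j : ℕ), by have := Finset.mem_range.mp j.2; omega⟩ ⟨n - 1, by omega⟩)) =
        (∑ j ∈ (Finset.range (n - 1)).attach,
          (q⁻¹ ^ (n - 1 - (j : ℕ))) •
            hF.T (Equiv.swap
              ⟨(j : ℕ), by have := Finset.mem_range.mp j.2; omega⟩ ⟨n - 1, by omega⟩)) * x) := by
  set b : Fin m := ⟨n - 1, by omega⟩
  have hcomm : ∀ l (hl : l < m), 0 < l → l ≠ n - 1 → l ≠ n →
      Commute (hF.T (swap ⟨l - 1, by omega⟩ ⟨l, hl⟩)) (hF.jucysMurphy b) :=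
    fun l _ hl hl1 hl2 => hF.commute_T_swap_jucysMurphy hq (by simp; omega)
      (Fin.ne_of_val_ne (by simp [b]; omega)) (Fin.ne_of_val_ne (by simp [b]; omega))
  rw [← hF.jucysMurphy_eq_sum_attach b]
  refine ⟨hcomm i him hi hi1 hi2, fun x hx => ?_⟩
  refine (Algebra.commute_of_mem_adjoin_of_forall_mem_commute hx ?_).symm.eq
  rintro _ ⟨j, ⟨hj1, hj2⟩, rfl⟩
  exact (hcomm j _ hj1 (by omega) (by omega)).symm
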